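/- arXiv:0906.2543 — 6 statements merged into one kernel-verified Lean document; each statement's English description precedes it below -/
import Mathlib

section
/- Let n ≥ 1 and k ∈ {0,…,n}. Let p = max(n−k, 1). If x is an n×n complex matrix such that x_{ij} = 0 whenever j ≤ k and i ≥ j+2, and x_{j+1,j} ≠ 0 whenever j ≤ k and j+1 ≤ n, then every eigenvalue of x has geometric multiplicity (dimension of the corresponding eigenspace) at most p. -/
open Matrix

/-- Every eigenvalue of a matrix that is unreduced Hessenberg in its first `k`
columns has geometric multiplicity at most `max (n - k) 1`. Indices are 1-based
in the informal statement; here `i j : Fin n` are 0-based, so the 1-based index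
of `i` is `i.val + 1`. -/
theorem hessenberg_geometric_multiplicity_le
    (n k : ℕ) (hn : 1 ≤ n) (hk : k ≤ n)
    (x : Matrix (Fin n) (Fin n) ℂ)
    (hzero : ∀ i j : Fin n, j.val + 1 ≤ k → i.val ≥ j.val + 2 → x i j = 0)
    (hsub : ∀ j : Fin n, j.val + 1 ≤ k → ∀ h : j.val + 1 < n, x ⟨j.val + 1, h⟩ j ≠ 0)
    (μ : ℂ) :
    Module.finrank ℂ ↥(Module.End.eigenspace (Matrix.toLin' x) μ) ≤ max (n - k) 1 := by
  classical
  set A : Matrix (Fin n) (Fin n) ℂ := x - μ • 1 with hA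
  set m : ℕ := min (n - 1) k with hm
  have hmn : m < n := by omega
  -- the eigenspace is the kernel of A
  have hEig : Module.End.eigenspace (Matrix.toLin' x) μ = LinearMap.ker (Matrix.toLin' A) := by
    rw [Module.End.eigenspace_def, hA]
    congr 1
    rw [map_sub, _root_.map_smul, Matrix.toLin'_one, Module.End.one_eq_id]
  -- embeddings
  have embmem : ∀ j : Fin m, (j : ℕ) < n := fun j => lt_trans j.2 hmn
  set emb : Fin m → Fin n := fun j => ⟨j, embmem j⟩ with hemb
  have rowmem : ∀ j : Fin m, (j : ℕ) + 1 < n := fun j => by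
    have := j.2; omega
  set row : Fin m → Fin n := fun j => ⟨j + 1, rowmem j⟩ with hrow
  set col : Fin m → (Fin n → ℂ) := fun j i => A i (emb j) with hcol
  -- entries of A off the diagonal coincide with x
  have hAne : ∀ i j : Fin n, i ≠ j → A i j = x i j := by
    intro i j hij
    simp [hA, Matrix.one_apply_ne hij]
  -- strictly lower entries in the first m columns vanish
  have hAzero : ∀ (i : Fin n) (j : Fin m), (i : ℕ) ≥ (j : ℕ) + 2 → A i (emb j) = 0 := by
    intro i j hij
    have hne : i ≠ emb j := Fin.ne_of_val_ne (by simp [hemb]; omega)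
    rw [hAne i (emb j) hne]
    exact hzero i (emb j) (by have := j.2; simp [hemb]; omega) (by simpa [hemb] using hij)
  have hAsub : ∀ j : Fin m, A (row j) (emb j) ≠ 0 := by
    intro j
    have hne : row j ≠ emb j := by
      intro h
      have := congrArg Fin.val h
      simp [hrow, hemb] at this
    rw [hAne _ _ hne]
    have := hsub (emb j) (by have := j.2; simp [hemb]; omega) (by simpa [hemb] using rowmem j)
    simpa [hrow, hemb] using this
  -- the first m columns are linearly independent
  have hli : LinearIndependent ℂ col := by
    rw [Fintype.linearIndependent_iff]
    intro g hg
    have main : ∀ d : ℕ, ∀ j : Fin m, m - (j : ℕ) ≤ d → g j = 0 := by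
      intro d
      induction d with
      | zero => intro j hj; exact absurd hj (by have := j.2; omega)
      | succ d ih =>
        intro j hj
        have hrowj := congrFun hg (row j)
        have hsum : ∑ i : Fin m, g i * col i (row j) = 0 := by
          simpa [Finset.sum_apply] using hrowj
        rw [Finset.sum_eq_single j] at hsum
        · exact (mul_eq_zero.mp hsum).resolve_right (hAsub j)
        · intro i _ hij
          rcases lt_or_gt_of_ne (fun h => hij (Fin.ext h) : (i : ℕ) ≠ (j : ℕ)) with h | h
          · have : col i (row j) = 0 := hAzero (row j) i (by simp [hrow]; omega)
            rw [this, mul_zero]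
          · have : g i = 0 := ih i (by omega)
            rw [this, zero_mul]
        · intro h; exact absurd (Finset.mem_univ j) h
    intro j
    exact main m j (by omega)
  -- hence the rank of A is at least m
  have hrank : m ≤ A.rank := by
    have hspan : Submodule.span ℂ (Set.range col) ≤ LinearMap.range A.mulVecLin := by
      rw [Matrix.range_mulVecLin]
      apply Submodule.span_mono
      rintro _ ⟨j, rfl⟩
      exact ⟨emb j, rfl⟩
    have h1 : Module.finrank ℂ (Submodule.span ℂ (Set.range col)) = m := by
      rw [finrank_span_eq_card hli]; simp
    have h2 := Submodule.finrank_mono hspan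
    rw [h1] at h2
    exact h2
  -- rank-nullity
  have hker : Module.finrank ℂ ↥(LinearMap.ker (Matrix.toLin' A)) ≤ n - m := by
    have hrn := LinearMap.finrank_range_add_finrank_ker (A.mulVecLin)
    have hdim : Module.finrank ℂ (Fin n → ℂ) = n := by simp
    rw [hdim] at hrn
    have htl : Matrix.toLin' A = A.mulVecLin := rfl
    rw [htl]
    have hr : A.rank = Module.finrank ℂ ↥(LinearMap.range A.mulVecLin) := rfl
    rw [hr] at hrank
    omega
  rw [hEig]
  have : n - m = max (n - k) 1 := by omega
  omega
end

section
/- Let n ≥ 1, k ∈ {0,…,n}, and p = max(n−k−1, 1). Let x be an n×n complex Hermitian matrix with x_{ij} = 0 whenever j ≤ k and i ≥ j+2, and x_{j+1,j} ≠ 0 whenever j ≤ k and j+1 ≤ n. Then at most p eigenvalues of x have multiplicity strictly greater than 1. -/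
open Matrix

/-- For a Hermitian matrix that is unreduced Hessenberg in its first `k` columns,
at most `max (n - k - 1) 1` eigenvalues have multiplicity strictly greater
than `1`. -/
theorem hessenberg_few_multiple_eigenvalues
    (n k : ℕ) (hn : 1 ≤ n) (hk : k ≤ n)
    (x : Matrix (Fin n) (Fin n) ℂ) (hx : x.IsHermitian)
    (hzero : ∀ i j : Fin n, j.val + 1 ≤ k → i.val ≥ j.val + 2 → x i j = 0)
    (hsub : ∀ j : Fin n, j.val + 1 ≤ k → ∀ h : j.val + 1 < n, x ⟨j.val + 1, h⟩ j ≠ 0) :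
    {μ : ℂ | 1 < Module.finrank ℂ ↥(Module.End.eigenspace (Matrix.toLin' x) μ)}.Finite ∧
    {μ : ℂ | 1 < Module.finrank ℂ ↥(Module.End.eigenspace (Matrix.toLin' x) μ)}.ncard
      ≤ max (n - k - 1) 1 := by
  set f := Matrix.toLin' x with hf
  set S := {μ : ℂ | 1 < Module.finrank ℂ ↥(Module.End.eigenspace f μ)} with hS
  -- Step 1: for each multiple eigenvalue, find an eigenvector vanishing on first k+1 coords
  have key : ∀ μ : S, ∃ v : Fin n → ℂ,
      Module.End.HasEigenvector f (μ : ℂ) v ∧ ∀ i : Fin n, i.val ≤ k → v i = 0 := by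
    rintro ⟨μ, hμ⟩
    have hμ' : 1 < Module.finrank ℂ ↥(Module.End.eigenspace f μ) := hμ
    set E := Module.End.eigenspace f μ with hE
    -- the coordinate-0 functional on E has nontrivial kernel
    let π : E →ₗ[ℂ] ℂ := (LinearMap.proj (⟨0, hn⟩ : Fin n)).comp E.subtype
    have hker : LinearMap.ker π ≠ ⊥ := by
      apply LinearMap.ker_ne_bot_of_finrank_lt
      simpa [Module.finrank_self] using hμ'
    obtain ⟨v, hvker, hvne⟩ := Submodule.ne_bot_iff _ |>.mp hker
    have hv0 : (v : Fin n → ℂ) ⟨0, hn⟩ = 0 := hvker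
    have hvmem : (v : Fin n → ℂ) ∈ E := v.2
    have heq : x.mulVec (v : Fin n → ℂ) = μ • (v : Fin n → ℂ) := by
      have := Module.End.mem_eigenspace_iff.mp hvmem
      rwa [hf, Matrix.toLin'_apply] at this
    set w : Fin n → ℂ := (v : Fin n → ℂ) with hw
    -- propagation: w vanishes on indices ≤ k
    have prop : ∀ m : ℕ, m ≤ k → ∀ hmn : m < n, w ⟨m, hmn⟩ = 0 := by
      intro m
      induction m using Nat.strong_induction_on with
      | _ m ih =>
        intro hm hmn
        cases m with
        | zero => exact hv0
        | succ a =>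
          have han : a < n := by omega
          have hrow := congrFun heq ⟨a, han⟩
          have hrhs : μ • w ⟨a, han⟩ = 0 := by
            rw [ih a (by omega) (by omega) han, smul_zero]
          rw [Matrix.mulVec, dotProduct] at hrow
          have hsum : ∑ j : Fin n, x ⟨a, han⟩ j * w j
              = x ⟨a, han⟩ ⟨a + 1, hmn⟩ * w ⟨a + 1, hmn⟩ := by
            apply Finset.sum_eq_single
            · intro j _ hj
              rcases lt_trichotomy j.val (a + 1) with h1 | h1 | h1
              · have : w j = 0 := by
                  have := ih j.val (by omega) (by omega) j.isLt
                  simpa [Fin.eta] using this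
                rw [this, mul_zero]
              · exact absurd (Fin.ext h1) hj
              · have hx0 : x j ⟨a, han⟩ = 0 := hzero j ⟨a, han⟩ hm (by show j.val ≥ a + 2; omega)
                have : x ⟨a, han⟩ j = 0 := by
                  rw [← hx.apply, hx0, star_zero]
                rw [this, zero_mul]
            · intro h; exact absurd (Finset.mem_univ _) h
          rw [hsum] at hrow
          rw [Pi.smul_apply] at hrow
          rw [hrhs] at hrow
          have hc : x ⟨a, han⟩ ⟨a + 1, hmn⟩ ≠ 0 := by
            rw [← hx.apply]
            exact star_ne_zero.mpr (hsub ⟨a, han⟩ hm hmn)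
          exact (mul_eq_zero.mp hrow).resolve_left hc
    refine ⟨w, ⟨hvmem, ?_⟩, ?_⟩
    · exact fun h0 => hvne (Subtype.ext h0)
    · intro i hi
      have := prop i.val hi i.isLt
      simpa [Fin.eta] using this
  choose g hev hvan using key
  have hli : LinearIndependent ℂ g :=
    Module.End.eigenvectors_linearIndependent f S g hev
  -- restriction to the last n - (k+1) coordinates
  let φ : (Fin n → ℂ) →ₗ[ℂ] (Fin (n - (k + 1)) → ℂ) :=
    LinearMap.pi fun j => LinearMap.proj ⟨j.val + (k + 1), by omega⟩
  have hdisj : Disjoint (Submodule.span ℂ (Set.range g)) (LinearMap.ker φ) := by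
    rw [Submodule.disjoint_def]
    intro u hu hu0
    have huW : ∀ i : Fin n, i.val ≤ k → u i = 0 := by
      have : u ∈ Submodule.span ℂ {v : Fin n → ℂ | ∀ i : Fin n, i.val ≤ k → v i = 0} := by
        refine Submodule.span_mono ?_ hu
        rintro _ ⟨μ, rfl⟩
        exact hvan μ
      refine Submodule.span_induction ?_ ?_ ?_ ?_ this
      · intro v hv; exact hv
      · intro i _; rfl
      · intro a b _ _ ha hb i hi; simp [ha i hi, hb i hi]
      · intro c a _ ha i hi; simp [ha i hi]
    have hu0' : ∀ j : Fin (n - (k + 1)), u ⟨j.val + (k + 1), by omega⟩ = 0 := by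
      intro j
      have := congrFun (LinearMap.mem_ker.mp hu0) j
      exact this
    funext i
    rcases le_or_gt i.val k with hi | hi
    · exact huW i hi
    · have hjlt : i.val - (k + 1) < n - (k + 1) := by omega
      have := hu0' ⟨i.val - (k + 1), hjlt⟩
      have hieq : (⟨(i.val - (k + 1)) + (k + 1), by omega⟩ : Fin n) = i := by
        apply Fin.ext; simp; omega
      rwa [hieq] at this
  have hli2 : LinearIndependent ℂ (φ ∘ g) := hli.map hdisj
  have hfinS : Finite ↥S := hli2.finite
  have hSfin : S.Finite := Set.finite_coe_iff.mp hfinS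
  refine ⟨hSfin, ?_⟩
  haveI := hSfin.fintype
  have hcard : Fintype.card ↥S ≤ Module.finrank ℂ (Fin (n - (k + 1)) → ℂ) :=
    hli2.fintype_card_le_finrank
  rw [Module.finrank_fin_fun] at hcard
  have : S.ncard = Fintype.card ↥S := by
    rw [← Nat.card_coe_set_eq, Nat.card_eq_fintype_card]
  omega
end

section
/- Let X be a normal topological space with covering dimension at most n. For every continuous map f : X → ℝ^{n+1} and every continuous function ε : X → ℝ_{>0}, there exists a continuous map g : X → ℝ^{n+1} such that for all x ∈ X, ‖g(x) − f(x)‖ ≤ 2√(n+1)·ε(x) and g(x) ≠ 0. -/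
/-!
Let `Aᵢ = {fᵢ ≤ -ε}` and `Bᵢ = {fᵢ ≥ ε}`. For a sign pattern `c ∈ {±}^{n+1}` let `U_c` be the
set of points that avoid `Aᵢ` when `cᵢ = +` and avoid `Bᵢ` when `cᵢ = -`; these finitely many open
sets cover `X`. By the dimension hypothesis they admit a refinement of order `≤ n + 1`, hence a
subordinate partition of unity `ρ` with at most `n + 1` nonzero functions at each point. Pick
vectors `w_c` in the open orthant of sign `c`, in general position: any `n + 1` of them are
linearly independent. Then `h = ∑ ρ_c • w_c` never vanishes, and `hᵢ ≤ 0` on `Aᵢ`, `hᵢ ≥ 0` on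
`Bᵢ`. Finally, truncate each coordinate of `f` to `[-ε, ε]` and replace the truncated part by
`ε` times `hᵢ` truncated to `[-1, 1]`: this moves each coordinate by at most `2ε`, and the new
coordinate has the strict sign of `hᵢ` wherever `hᵢ ≠ 0`.
-/

/-- `X` has Lebesgue covering dimension at most `n`: every open cover admits an
open refinement in which every point lies in at most `n + 1` members. -/
def CovDimLE (X : Type*) [TopologicalSpace X] (n : ℕ) : Prop :=
  ∀ (ι : Type) (U : ι → Set X), (∀ i, IsOpen (U i)) → (⋃ i, U i) = Set.univ →
    ∃ (κ : Type) (V : κ → Set X), (∀ j, IsOpen (V j)) ∧ (⋃ j, V j) = Set.univ ∧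
      (∀ j, ∃ i, V j ⊆ U i) ∧
      ∀ x : X, {j | x ∈ V j}.Finite ∧ {j | x ∈ V j}.ncard ≤ n + 1

open Set Module

theorem Submodule.dense_compl_of_ne_top {M : Type*} [AddCommGroup M] [Module ℝ M]
    [TopologicalSpace M] [ContinuousAdd M] [ContinuousSMul ℝ M] {P : Submodule ℝ M}
    (hP : P ≠ ⊤) : Dense (P : Set M)ᶜ := by
  rw [← interior_eq_empty_iff_dense_compl, ← not_nonempty_iff_eq_empty]
  exact fun h => hP (P.eq_top_of_nonempty_interior' h)

theorem span_image_ne_top_of_card_lt_finrank {M ι : Type*} [AddCommGroup M] [Module ℝ M]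
    (w : ι → M) {t : Finset ι} (ht : t.card < finrank ℝ M) : Submodule.span ℝ (w '' t) ≠ ⊤ := by
  classical
  rw [← Finset.coe_image]
  refine (span_lt_top_of_card_lt_finrank ?_).ne
  rw [Finset.toFinset_coe]
  exact Finset.card_image_le.trans_lt ht

section GeneralPosition

variable {E : Type*} [NormedAddCommGroup E] [NormedSpace ℝ E] [FiniteDimensional ℝ E]

theorem exists_mem_notMem_span_of_card_lt_finrank {ι : Type*} {R : Set E} (hR : IsOpen R)
    (hne : R.Nonempty) (w : ι → E) (s : Finset ι) :
    ∃ v ∈ R, ∀ t ⊆ s, t.card < finrank ℝ E → v ∉ Submodule.span ℝ (w '' t) := by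
  classical
  let small := s.powerset.filter fun t => t.card < finrank ℝ E
  have hdense : Dense (⋂ t ∈ (small : Set (Finset ι)), (Submodule.span ℝ (w '' t) : Set E)ᶜ) :=
    dense_biInter_of_isOpen (fun t _ => (Submodule.closed_of_finiteDimensional _).isOpen_compl)
      small.countable_toSet fun t ht => Submodule.dense_compl_of_ne_top <|
        span_image_ne_top_of_card_lt_finrank w (Finset.mem_filter.1 ht).2
  obtain ⟨v, hvR, hv⟩ := hdense.inter_open_nonempty R hR hne
  exact ⟨v, hvR, fun t hts ht => mem_iInter₂.1 hv t (by simp [small, hts, ht])⟩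

theorem exists_forall_linearIndepOn_of_card_le_finrank {ι : Type*} {R : ι → Set E}
    (hR : ∀ i, IsOpen (R i)) (hne : ∀ i, (R i).Nonempty) (s : Finset ι) :
    ∃ w : ι → E, (∀ i, w i ∈ R i) ∧
      ∀ t ⊆ s, t.card ≤ finrank ℝ E → LinearIndepOn ℝ w (t : Set ι) := by
  classical
  induction s using Finset.induction_on with
  | empty =>
    refine ⟨fun i => (hne i).some, fun i => (hne i).some_mem, fun t ht _ => ?_⟩
    rw [Finset.subset_empty.1 ht, Finset.coe_empty]
    exact linearIndepOn_empty ℝ _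
  | @insert a s ha ih =>
    obtain ⟨w, hwR, hw⟩ := ih
    obtain ⟨v, hvR, hv⟩ := exists_mem_notMem_span_of_card_lt_finrank (hR a) (hne a) w s
    refine ⟨Function.update w a v, fun i => ?_, fun t hts ht => ?_⟩
    · rcases eq_or_ne i a with rfl | hi
      · simpa using hvR
      · simpa [hi] using hwR i
    have hagree : EqOn w (Function.update w a v) (t.erase a : Set ι) := fun i hi =>
      (Function.update_of_ne (Finset.ne_of_mem_erase hi) _ _).symm
    have hsub : t.erase a ⊆ s := fun i hi =>
      (Finset.mem_insert.1 (hts (Finset.mem_of_mem_erase hi))).resolve_left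
        (Finset.ne_of_mem_erase hi)
    have hindep : LinearIndepOn ℝ w (t.erase a : Set ι) :=
      hw _ hsub ((Finset.card_erase_le).trans ht)
    by_cases hat : a ∈ t
    · rw [← Finset.insert_erase hat, Finset.coe_insert,
        linearIndepOn_insert (by simp), ← hagree.image_eq, Function.update_self]
      exact ⟨hindep.congr hagree, hv _ hsub ((Finset.card_erase_lt_of_mem hat).trans_le ht)⟩
    · rw [Finset.erase_eq_of_notMem hat] at hagree hindep
      exact hindep.congr hagree

end GeneralPosition

theorem PartitionOfUnity.sum_smul_ne_zero {ι X V : Type*} [Fintype ι] [TopologicalSpace X]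
    [AddCommGroup V] [Module ℝ V] {s : Set X} (ρ : PartitionOfUnity ι X s) {x : X} (hx : x ∈ s)
    {w : ι → V} (hw : LinearIndepOn ℝ w (ρ.finsupport x : Set ι)) : ∑ i, ρ i x • w i ≠ 0 := by
  intro h0
  rw [← Finset.sum_subset (Finset.subset_univ (ρ.finsupport x)) fun i _ hi => by
    simp_all] at h0
  obtain ⟨i, hi⟩ := ρ.exists_pos hx
  exact hi.ne' (linearIndepOn_finset_iff.1 hw _ h0 i (by simpa using hi.ne'))

def orthant {ι : Type*} (c : ι → Bool) : Set (ι → ℝ) :=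
  ⋂ i, if c i then {v | 0 < v i} else {v | v i < 0}

theorem isOpen_orthant {ι : Type*} [Finite ι] (c : ι → Bool) : IsOpen (orthant c) :=
  isOpen_iInter_of_finite fun i => by
    split
    exacts [isOpen_lt continuous_const (continuous_apply i),
      isOpen_lt (continuous_apply i) continuous_const]

theorem orthant_nonempty {ι : Type*} (c : ι → Bool) : (orthant c).Nonempty :=
  ⟨fun i => if c i then 1 else -1, mem_iInter.2 fun i => by cases h : c i <;> simp [h]⟩

namespace CovDimLE

variable {X : Type*} [TopologicalSpace X] {n : ℕ}

theorem exists_precise_refinement (hdim : CovDimLE X n) {ι : Type} {U : ι → Set X}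
    (hUo : ∀ i, IsOpen (U i)) (hU : ⋃ i, U i = univ) :
    ∃ Y : ι → Set X, (∀ i, IsOpen (Y i)) ∧ ⋃ i, Y i = univ ∧ (∀ i, Y i ⊆ U i) ∧
      ∀ x, {i | x ∈ Y i}.ncard ≤ n + 1 := by
  obtain ⟨κ, V, hVo, hV, hVU, hord⟩ := hdim ι U hUo hU
  choose c hc using hVU
  refine ⟨fun i => ⋃ (j) (_ : c j = i), V j, fun i => isOpen_biUnion fun j _ => hVo j, ?_,
    fun i => iUnion₂_subset fun j hj => hj ▸ hc j, fun x => ?_⟩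
  · refine eq_univ_of_forall fun x => ?_
    obtain ⟨j, hj⟩ := mem_iUnion.1 (hV.symm ▸ mem_univ x : x ∈ ⋃ j, V j)
    exact mem_iUnion.2 ⟨c j, mem_iUnion₂.2 ⟨j, rfl, hj⟩⟩
  · have hsub : {i | x ∈ ⋃ (j) (_ : c j = i), V j} ⊆ c '' {j | x ∈ V j} := by
      intro i hi
      obtain ⟨j, rfl, hj⟩ := mem_iUnion₂.1 hi
      exact ⟨j, hj, rfl⟩
    calc _ ≤ (c '' {j | x ∈ V j}).ncard := ncard_le_ncard hsub ((hord x).1.image c)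
      _ ≤ {j | x ∈ V j}.ncard := ncard_image_le (hord x).1
      _ ≤ n + 1 := (hord x).2

theorem exists_partitionOfUnity [NormalSpace X] (hdim : CovDimLE X n) {ι : Type} [Finite ι]
    {U : ι → Set X} (hUo : ∀ i, IsOpen (U i)) (hU : ⋃ i, U i = univ) :
    ∃ ρ : PartitionOfUnity ι X, ρ.IsSubordinate U ∧ ∀ x, (ρ.finsupport x).card ≤ n + 1 := by
  obtain ⟨Y, hYo, hY, hYU, hord⟩ := hdim.exists_precise_refinement hUo hU
  obtain ⟨ρ, hρ⟩ := PartitionOfUnity.exists_isSubordinate_of_locallyFinite isClosed_univ Y hYo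
    (locallyFinite_of_finite Y) hY.ge
  refine ⟨ρ, fun i => (hρ i).trans (hYU i), fun x => ?_⟩
  have hsub : (ρ.finsupport x : Set ι) ⊆ {i | x ∈ Y i} := by
    intro i hi
    rw [PartitionOfUnity.coe_finsupport] at hi
    exact hρ i (subset_tsupport _ hi)
  rw [← ncard_coe_finset]
  exact (ncard_le_ncard hsub (toFinite _)).trans (hord x)

theorem exists_continuous_ne_zero_of_disjoint [NormalSpace X] (hdim : CovDimLE X n)
    {A B : Fin (n + 1) → Set X} (hA : ∀ i, IsClosed (A i)) (hB : ∀ i, IsClosed (B i))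
    (hAB : ∀ i, Disjoint (A i) (B i)) :
    ∃ h : X → Fin (n + 1) → ℝ, Continuous h ∧ (∀ x, h x ≠ 0) ∧
      (∀ i, ∀ x ∈ A i, h x i ≤ 0) ∧ ∀ i, ∀ x ∈ B i, 0 ≤ h x i := by
  classical
  let U : (Fin (n + 1) → Bool) → Set X := fun c => ⋂ i, if c i then (A i)ᶜ else (B i)ᶜ
  have hUo : ∀ c, IsOpen (U c) := fun c => isOpen_iInter_of_finite fun i => by
    split
    exacts [(hA i).isOpen_compl, (hB i).isOpen_compl]
  have hU : ⋃ c, U c = univ := by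
    refine eq_univ_of_forall fun x =>
      mem_iUnion.2 ⟨fun i => decide (x ∉ A i), mem_iInter.2 fun i => ?_⟩
    by_cases hx : x ∈ A i
    · simpa [hx] using disjoint_left.1 (hAB i) hx
    · simp [hx]
  obtain ⟨ρ, hρU, hρord⟩ := hdim.exists_partitionOfUnity hUo hU
  obtain ⟨w, hwR, hw⟩ := exists_forall_linearIndepOn_of_card_le_finrank
    (fun c : Fin (n + 1) → Bool => isOpen_orthant c) orthant_nonempty Finset.univ
  have hsign : ∀ c i x, ρ c x ≠ 0 → (x ∈ A i → w c i < 0) ∧ (x ∈ B i → 0 < w c i) := by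
    intro c i x hc
    have hxU := mem_iInter.1 (hρU c (subset_tsupport _ hc)) i
    have hwc := mem_iInter.1 (hwR c) i
    cases hci : c i <;> simp only [hci] at hxU hwc
    · exact ⟨fun _ => hwc, fun hx => absurd hx hxU⟩
    · exact ⟨fun hx => absurd hx hxU, fun _ => hwc⟩
  refine ⟨fun x => ∑ c, ρ c x • w c, by fun_prop, fun x => ρ.sum_smul_ne_zero (mem_univ x)
    (hw _ (Finset.subset_univ _) ((hρord x).trans (finrank_fin_fun ℝ).ge)), ?_, ?_⟩
  · intro i x hx
    simp only [Finset.sum_apply, Pi.smul_apply, smul_eq_mul]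
    refine Finset.sum_nonpos fun c _ => ?_
    rcases eq_or_ne (ρ c x) 0 with hc | hc
    · simp [hc]
    · exact mul_nonpos_of_nonneg_of_nonpos (ρ.nonneg c x) ((hsign c i x hc).1 hx).le
  · intro i x hx
    simp only [Finset.sum_apply, Pi.smul_apply, smul_eq_mul]
    refine Finset.sum_nonneg fun c _ => ?_
    rcases eq_or_ne (ρ c x) 0 with hc | hc
    · simp [hc]
    · exact mul_nonneg (ρ.nonneg c x) ((hsign c i x hc).2 hx).le

end CovDimLE

noncomputable def signNudge (ε a b : ℝ) : ℝ := a - max (-ε) (min ε a) + ε * max (-1) (min 1 b)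

theorem abs_signNudge_sub_le {ε : ℝ} (hε : 0 ≤ ε) (a b : ℝ) :
    |signNudge ε a b - a| ≤ 2 * ε := by
  unfold signNudge
  rw [abs_le]
  constructor <;> cases max_cases (-ε) (min ε a) <;> cases min_cases ε a <;>
    cases max_cases (-1 : ℝ) (min 1 b) <;> cases min_cases (1 : ℝ) b <;> nlinarith

theorem signNudge_pos {ε a b : ℝ} (hε : 0 < ε) (ha : -ε < a) (hb : 0 < b) :
    0 < signNudge ε a b := by
  unfold signNudge
  cases max_cases (-ε) (min ε a) <;> cases min_cases ε a <;>
    cases max_cases (-1 : ℝ) (min 1 b) <;> cases min_cases (1 : ℝ) b <;> nlinarith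

theorem signNudge_neg {ε a b : ℝ} (hε : 0 < ε) (ha : a < ε) (hb : b < 0) :
    signNudge ε a b < 0 := by
  unfold signNudge
  cases max_cases (-ε) (min ε a) <;> cases min_cases ε a <;>
    cases max_cases (-1 : ℝ) (min 1 b) <;> cases min_cases (1 : ℝ) b <;> nlinarith

theorem EuclideanSpace.norm_le_sqrt_card_mul {ι : Type*} [Fintype ι] (x : EuclideanSpace ℝ ι)
    {C : ℝ} (hC : 0 ≤ C) (hx : ∀ i, |x i| ≤ C) : ‖x‖ ≤ √(Fintype.card ι) * C := by
  calc ‖x‖ = √(∑ i, ‖x i‖ ^ 2) := EuclideanSpace.norm_eq x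
    _ ≤ √(∑ _i : ι, C ^ 2) := by
      gcongr with i
      exact hx i
    _ = √(Fintype.card ι) * C := by
      rw [Finset.sum_const, Finset.card_univ, nsmul_eq_mul, Real.sqrt_mul (Nat.cast_nonneg _),
        Real.sqrt_sq hC]

theorem exists_continuous_ne_zero_norm_sub_le {X ι : Type*} [TopologicalSpace X] [Fintype ι]
    {f : X → EuclideanSpace ℝ ι} (hf : Continuous f) {ε : X → ℝ} (hε : Continuous ε)
    (hεpos : ∀ x, 0 < ε x) {h : X → ι → ℝ} (hh : Continuous h) (hh0 : ∀ x, h x ≠ 0)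
    (hA : ∀ i x, f x i ≤ -ε x → h x i ≤ 0) (hB : ∀ i x, ε x ≤ f x i → 0 ≤ h x i) :
    ∃ g : X → EuclideanSpace ℝ ι, Continuous g ∧
      ∀ x, ‖g x - f x‖ ≤ 2 * √(Fintype.card ι) * ε x ∧ g x ≠ 0 := by
  refine ⟨fun x => WithLp.toLp 2 fun i => signNudge (ε x) (f x i) (h x i), ?_,
    fun x => ⟨?_, ?_⟩⟩
  · unfold signNudge
    fun_prop
  · rw [mul_assoc, mul_left_comm]
    exact EuclideanSpace.norm_le_sqrt_card_mul _ (by linarith [hεpos x]) fun i =>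
      abs_signNudge_sub_le (hεpos x).le _ _
  · intro hg
    obtain ⟨i, hi⟩ := Function.ne_iff.1 (hh0 x)
    have hgi : signNudge (ε x) (f x i) (h x i) = 0 := congrArg (· i) hg
    rcases hi.lt_or_gt with hneg | hpos
    · exact (signNudge_neg (hεpos x) (lt_of_not_ge fun hle => hneg.not_ge (hB i x hle))
        hneg).ne hgi
    · exact (signNudge_pos (hεpos x) (lt_of_not_ge fun hle => hpos.not_ge (hA i x hle))
        hpos).ne' hgi

/-- Over a normal space of covering dimension at most `n`, any continuous map to
`ℝ^{n+1}` may be perturbed by at most `2√(n+1)·ε(x)` pointwise so as to avoid `0`. -/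
theorem avoid_zero_of_covDimLE
    (n : ℕ) (X : Type*) [TopologicalSpace X] [NormalSpace X] (hdim : CovDimLE X n)
    (f : X → EuclideanSpace ℝ (Fin (n + 1))) (hf : Continuous f)
    (ε : X → ℝ) (hε : Continuous ε) (hεpos : ∀ x, 0 < ε x) :
    ∃ g : X → EuclideanSpace ℝ (Fin (n + 1)), Continuous g ∧
      ∀ x, ‖g x - f x‖ ≤ 2 * Real.sqrt (n + 1) * ε x ∧ g x ≠ 0 := by
  obtain ⟨h, hh, hh0, hA, hB⟩ := hdim.exists_continuous_ne_zero_of_disjoint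
    (A := fun i => {x | f x i ≤ -ε x}) (B := fun i => {x | ε x ≤ f x i})
    (fun i => isClosed_le (by fun_prop) (by fun_prop))
    (fun i => isClosed_le (by fun_prop) (by fun_prop))
    fun i => disjoint_left.2 fun x (hA : f x i ≤ -ε x) (hB : ε x ≤ f x i) => by
      linarith [hεpos x]
  simpa using exists_continuous_ne_zero_norm_sub_le hf hε hεpos hh hh0 hA hB
end

section
/- Let n ∈ ℕ, let X be a normal space with covering dimension ≤ n, let Y be a metric topological manifold of dimension n+1 admitting an atlas of bi-Lipschitz charts, and let Z ⊂ Y be a discrete subset. Then for any continuous f : X → Y and continuous ε : X → ℝ_{>0}, there exists a continuous g : X → Y such that d(g(x), f(x)) < ε(x) and g(x) ∉ Z for all x ∈ X; moreover, for any neighborhood W of Z, one can choose g to agree with f outside f^{-1}(W). -/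
/-- `Y` is a metric topological manifold of dimension `n+1` admitting an atlas of
bi-Lipschitz charts: every point has an open neighbourhood mapped by a
bi-Lipschitz map onto an open subset of `ℝ^{n+1}`. -/
def HasBiLipschitzAtlas (n : ℕ) (Y : Type*) [MetricSpace Y] : Prop :=
  ∀ y : Y, ∃ (V : Set Y) (φ : Y → EuclideanSpace ℝ (Fin (n + 1))),
    y ∈ V ∧ IsOpen V ∧ IsOpen (φ '' V) ∧ Set.InjOn φ V ∧
    ∃ K : ℝ, 0 < K ∧ ∀ a ∈ V, ∀ b ∈ V,
      dist (φ a) (φ b) ≤ K * dist a b ∧ dist a b ≤ K * dist (φ a) (φ b)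

/-!
Over a space of covering dimension at most `n`, a bounded continuous map `H` into `ℝ^{n+1}` is
pushed off `0` as follows: pull back a cover of a large ball by small balls, take a partition of
unity subordinate to it in which every point meets at most `n + 1` supports, and send `x` to the
corresponding convex combination of slightly moved ball centres, chosen in general position so
that no `n + 1` of them have `0` in their convex hull. Rescaling by the tolerance `δ` and cutting
off where `δ ≤ ‖H‖` handles unbounded maps and variable tolerance, and only changes `H` near `0`.

In the manifold, each point `z` of the discrete set `Z` is avoided inside a bi-Lipschitz chart, by
a change of `f` confined to a small ball around `z`. These balls are pairwise disjoint and the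
changes are small compared with their radii, so the local changes glue to a continuous map.
-/

open Set Metric Module Finset Function Topology

section GeneralPosition

variable {E : Type*} [NormedAddCommGroup E] [NormedSpace ℝ E]

theorem Submodule.dense_compl_of_finrank_lt (S : Submodule ℝ E) (h : finrank ℝ S < finrank ℝ E) :
    Dense (S : Set E)ᶜ := by
  refine interior_eq_empty_iff_dense_compl.1 (Set.not_nonempty_iff_eq_empty.1 fun hne => ?_)
  rw [S.eq_top_of_nonempty_interior' hne, finrank_top] at h
  exact h.false

theorem mem_span_of_zero_mem_convexHull_insert {v : E} {S : Set E}
    (h : (0 : E) ∈ convexHull ℝ (insert v S)) (hS : (0 : E) ∉ convexHull ℝ S) :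
    v ∈ Submodule.span ℝ S := by
  rcases S.eq_empty_or_nonempty with rfl | hne
  · rw [insert_empty_eq, convexHull_singleton, mem_singleton_iff] at h
    rw [← h]
    exact zero_mem _
  rw [convexHull_insert hne, mem_convexJoin] at h
  obtain ⟨a, ha, b, hb, α, β, -, -, hαβ, hsum⟩ := h
  rw [mem_singleton_iff.1 ha] at hsum
  have hα0 : α ≠ 0 := by
    rintro rfl
    rw [zero_add] at hαβ
    rw [zero_smul, zero_add, hαβ, one_smul] at hsum
    exact hS (hsum ▸ hb)
  have hv : v = -(β / α) • b := by
    rw [neg_smul, eq_neg_iff_add_eq_zero, div_eq_inv_mul, mul_smul, ← inv_smul_smul₀ hα0 v,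
      ← smul_add, hsum, smul_zero]
  rw [hv]
  exact Submodule.smul_mem _ _
    (convexHull_min Submodule.subset_span (Submodule.span ℝ S).convex hb)


theorem exists_perturbation_zero_notMem_convexHull [FiniteDimensional ℝ E] {ι : Type*}
    (s : Finset ι) (q : ι → E) {ρ : ℝ} (hρ : 0 < ρ) :
    ∃ p : ι → E, (∀ i ∈ s, dist (p i) (q i) < ρ) ∧
      ∀ T ⊆ s, #T ≤ finrank ℝ E → (0 : E) ∉ convexHull ℝ (p '' T) := by
  classical
  induction s using Finset.induction_on with
  | empty =>
    refine ⟨q, by simp, fun T hT _ => ?_⟩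
    rw [Finset.subset_empty.1 hT, Finset.coe_empty, image_empty, convexHull_empty]
    exact notMem_empty 0
  | insert a s ha ih =>
    obtain ⟨p, hpq, hp⟩ := ih
    set F := {T ∈ s.powerset | #T < finrank ℝ E}
    have hdense : Dense (⋂ T ∈ (F : Set (Finset ι)), (Submodule.span ℝ (p '' T) : Set E)ᶜ) := by
      refine dense_biInter_of_isOpen
        (fun T _ => (Submodule.closed_of_finiteDimensional _).isOpen_compl)
        F.finite_toSet.countable fun T hT => Submodule.dense_compl_of_finrank_lt _ ?_
      rw [← Finset.coe_image]
      exact (finrank_span_finset_le_card _).trans_lt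
        (Finset.card_image_le.trans_lt (Finset.mem_filter.1 hT).2)
    obtain ⟨v, hvq, hv⟩ := hdense.inter_open_nonempty _ isOpen_ball ⟨q a, mem_ball_self hρ⟩
    have himage : ∀ T : Finset ι, a ∉ T → Function.update p a v '' T = p '' T := fun T haT =>
      image_congr fun i hi => Function.update_of_ne (ne_of_mem_of_not_mem hi haT) _ _
    refine ⟨Function.update p a v, fun i hi => ?_, fun T hT hTcard => ?_⟩
    · rcases Finset.mem_insert.1 hi with rfl | hi
      · simpa using hvq
      · rw [Function.update_of_ne (ne_of_mem_of_not_mem hi ha)]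
        exact hpq i hi
    by_cases haT : a ∈ T
    · have hT's : T.erase a ⊆ s := by
        simpa [Finset.erase_insert ha] using Finset.erase_subset_erase a hT
      have hT'card : #(T.erase a) < finrank ℝ E := by
        have := Finset.card_pos.2 ⟨a, haT⟩
        rw [Finset.card_erase_of_mem haT]
        omega
      rw [← Finset.insert_erase haT, Finset.coe_insert, image_insert_eq, Function.update_self,
        himage _ (Finset.notMem_erase a T)]
      intro h0
      exact mem_iInter₂.1 hv (T.erase a) (Finset.mem_filter.2 ⟨Finset.mem_powerset.2 hT's, hT'card⟩)
        (mem_span_of_zero_mem_convexHull_insert h0 (hp _ hT's hT'card.le))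
    · rw [himage T haT]
      exact hp T ((Finset.subset_insert_iff_of_notMem haT).1 hT) hTcard

end GeneralPosition

section CoveringDimension

variable {X : Type*} [TopologicalSpace X] {n : ℕ}

theorem CovDimLE.exists_precise_refinement_s7 (hdim : CovDimLE X n) {ι : Type} (U : ι → Set X)
    (hU : ∀ i, IsOpen (U i)) (hcov : ⋃ i, U i = univ) :
    ∃ V : ι → Set X, (∀ i, IsOpen (V i)) ∧ (∀ i, V i ⊆ U i) ∧ ⋃ i, V i = univ ∧
      ∀ x, {i | x ∈ V i}.Finite ∧ {i | x ∈ V i}.ncard ≤ n + 1 := by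
  obtain ⟨κ, W, hWo, hWcov, hWU, hWord⟩ := hdim ι U hU hcov
  choose idx hidx using hWU
  have hmem : ∀ x, {i | x ∈ ⋃ j ∈ idx ⁻¹' {i}, W j} = idx '' {j | x ∈ W j} := by
    intro x
    ext i
    simp [and_comm]
  refine ⟨fun i => ⋃ j ∈ idx ⁻¹' {i}, W j, fun i => isOpen_biUnion fun j _ => hWo j,
    fun i => iUnion₂_subset fun j hj => mem_singleton_iff.1 hj ▸ hidx j, ?_, fun x => ?_⟩
  · refine eq_univ_of_forall fun x => ?_
    obtain ⟨j, hj⟩ := mem_iUnion.1 (hWcov ▸ mem_univ x)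
    exact mem_iUnion.2 ⟨idx j, mem_biUnion rfl hj⟩
  · rw [hmem]
    exact ⟨(hWord x).1.image _, (ncard_image_le (hWord x).1).trans (hWord x).2⟩

theorem CovDimLE.subtype_of_isClosed (hdim : CovDimLE X n) {C : Set X} (hC : IsClosed C) :
    CovDimLE C n := by
  intro ι U hU hcov
  choose O hO hOU using fun i => isOpen_induced_iff.1 (hU i)
  have hcov' : ⋃ o : Option ι, o.elim Cᶜ O = univ := by
    refine eq_univ_of_forall fun x => ?_
    by_cases hx : x ∈ C
    · obtain ⟨i, hi⟩ := mem_iUnion.1 (hcov ▸ mem_univ (⟨x, hx⟩ : C))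
      rw [← hOU i] at hi
      exact mem_iUnion.2 ⟨some i, hi⟩
    · exact mem_iUnion.2 ⟨none, hx⟩
  obtain ⟨V, hVo, hVO, hVcov, hVord⟩ := hdim.exists_precise_refinement_s7 _
    (by rintro (_ | i); exacts [hC.isOpen_compl, hO i]) hcov'
  refine ⟨ι, fun i => Subtype.val ⁻¹' V (some i), fun i => (hVo _).preimage continuous_subtype_val,
    ?_, fun i => ⟨i, hOU i ▸ preimage_mono (hVO (some i))⟩, fun x => ?_⟩
  · refine eq_univ_of_forall fun x => ?_
    obtain ⟨o, ho⟩ := mem_iUnion.1 (hVcov ▸ mem_univ (x : X))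
    cases o with
    | none => exact absurd x.2 (hVO none ho)
    | some i => exact mem_iUnion.2 ⟨i, ho⟩
  · have hfin := (hVord x).1
    refine ⟨hfin.preimage (Option.some_injective _).injOn, ?_⟩
    exact (ncard_le_ncard_of_injOn some (fun i hi => hi) (Option.some_injective _).injOn hfin).trans
      (hVord x).2

theorem CovDimLE.exists_partitionOfUnity_s7 [NormalSpace X] (hdim : CovDimLE X n) {ι : Type}
    [Finite ι] (U : ι → Set X) (hU : ∀ i, IsOpen (U i)) (hcov : ⋃ i, U i = univ) :
    ∃ ρ : PartitionOfUnity ι X univ, ρ.IsSubordinate U ∧ ∀ x, {i | ρ i x ≠ 0}.ncard ≤ n + 1 := by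
  obtain ⟨V, hVo, hVU, hVcov, hVord⟩ := hdim.exists_precise_refinement_s7 U hU hcov
  obtain ⟨ρ, hρ⟩ := PartitionOfUnity.exists_isSubordinate_of_locallyFinite isClosed_univ V hVo
    (locallyFinite_of_finite V) hVcov.ge
  exact ⟨ρ, fun i => (hρ i).trans (hVU i), fun x =>
    (ncard_le_ncard (fun i hi => hρ i (subset_tsupport _ hi)) (hVord x).1).trans (hVord x).2⟩

end CoveringDimension

section Avoidance

variable {X : Type*} [TopologicalSpace X] [NormalSpace X] {n : ℕ}
  {E : Type} [NormedAddCommGroup E] [NormedSpace ℝ E] [FiniteDimensional ℝ E]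

theorem exists_continuous_ne_zero_of_bounded (hdim : CovDimLE X n) (hE : n + 1 ≤ finrank ℝ E)
    {H : X → E} (hH : Continuous H) {R : ℝ} (hR : ∀ x, ‖H x‖ ≤ R) {η : ℝ} (hη : 0 < η) :
    ∃ G : X → E, Continuous G ∧ ∀ x, dist (G x) (H x) < η ∧ G x ≠ 0 := by
  obtain ⟨t, ht⟩ := (isCompact_closedBall (0 : E) R).elim_finite_subcover
    (fun q => ball q (η / 2)) (fun _ => isOpen_ball)
    (fun q _ => mem_iUnion.2 ⟨q, mem_ball_self (half_pos hη)⟩)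
  have hcov : ⋃ q : t, H ⁻¹' ball (q : E) (η / 2) = univ := by
    refine eq_univ_of_forall fun x => ?_
    obtain ⟨q, hq, hxq⟩ := mem_iUnion₂.1 (ht (mem_closedBall_zero_iff.2 (hR x)))
    exact mem_iUnion.2 ⟨⟨q, hq⟩, hxq⟩
  obtain ⟨ρ, hρU, hρord⟩ := hdim.exists_partitionOfUnity_s7 _ (fun _ => isOpen_ball.preimage hH) hcov
  obtain ⟨p, hpq, hp⟩ :=
    exists_perturbation_zero_notMem_convexHull Finset.univ (fun q : t => (q : E)) (half_pos hη)
  refine ⟨fun x => ∑ᶠ q, ρ q x • p q, ρ.continuous_finsum_smul fun _ _ _ => continuousAt_const,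
    fun x => ⟨?_, ?_⟩⟩
  · refine mem_ball.1 ((convex_ball (H x) η).finsum_mem (ρ.nonneg · x) (ρ.sum_eq_one (mem_univ x))
      fun q hq => ?_)
    have hxq : dist (H x) q < η / 2 := hρU q (subset_tsupport _ hq)
    rw [mem_ball]
    linarith [dist_triangle_right (p q) (H x) q, hpq q (Finset.mem_univ q)]
  · set T := {q | ρ q x ≠ 0}.toFinset
    have hT : #T ≤ finrank ℝ E := by
      rw [← Set.ncard_eq_toFinset_card']
      exact (hρord x).trans hE
    have hG := (convex_convexHull ℝ (p '' T)).finsum_mem (ρ.nonneg · x) (ρ.sum_eq_one (mem_univ x))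
      fun q hq => subset_convexHull ℝ _ (mem_image_of_mem p (by simpa [T] using hq))
    exact fun h0 => hp T (Finset.subset_univ T) hT (h0 ▸ hG)

theorem exists_continuous_ne_zero_dist_lt_one (hdim : CovDimLE X n)
    (hE : n + 1 ≤ finrank ℝ E) {H : X → E} (hH : Continuous H) :
    ∃ G : X → E, Continuous G ∧ ∀ x, dist (G x) (H x) < 1 ∧ G x ≠ 0 ∧ (1 ≤ ‖H x‖ → G x = H x) := by
  -- `H₁` is `H` pushed into the unit ball, where the bounded case applies; the cutoff `χ` passes
  -- from `G₁` where `‖H‖ ≤ 1 / 2` to `H` itself where `1 ≤ ‖H‖`, and `H₁ = H` in between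
  have hmax : ∀ x, 0 < max 1 ‖H x‖ := fun x => zero_lt_one.trans_le (le_max_left _ _)
  set H₁ : X → E := fun x => (max 1 ‖H x‖)⁻¹ • H x
  have hH₁ : Continuous H₁ :=
    ((continuous_const.max hH.norm).inv₀ fun x => (hmax x).ne').smul hH
  have hH₁le : ∀ x, ‖H₁ x‖ ≤ 1 := fun x => by
    rw [norm_smul, norm_inv, Real.norm_of_nonneg (hmax x).le, inv_mul_le_iff₀ (hmax x), mul_one]
    exact le_max_right _ _
  obtain ⟨G₁, hG₁c, hG₁⟩ := exists_continuous_ne_zero_of_bounded hdim hE hH₁ hH₁le one_half_pos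
  set χ : X → ℝ := fun x => min 1 (max 0 (2 - 2 * ‖H x‖))
  refine ⟨fun x => H x + χ x • (G₁ x - H x), by fun_prop, fun x => ?_⟩
  rcases le_or_gt 1 ‖H x‖ with hx | hx
  · have hχ : χ x = 0 := by
      simp only [χ]
      rw [max_eq_left (by linarith), min_eq_right zero_le_one]
    dsimp only
    rw [hχ, zero_smul, add_zero, dist_self]
    exact ⟨zero_lt_one, norm_pos_iff.1 (zero_lt_one.trans_le hx), fun _ => rfl⟩
  have hd : dist (G₁ x) (H x) < 1 / 2 := by
    simpa [H₁, max_eq_left hx.le] using (hG₁ x).1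
  have hnear : dist (H x + χ x • (G₁ x - H x)) (H x) < 1 / 2 := by
    rw [dist_eq_norm, add_sub_cancel_left, norm_smul,
      Real.norm_of_nonneg (le_min zero_le_one (le_max_left _ _)), ← dist_eq_norm]
    exact (mul_le_of_le_one_left dist_nonneg (min_le_left _ _)).trans_lt hd
  refine ⟨hnear.trans one_half_lt_one, ?_, fun h => absurd h hx.not_ge⟩
  rcases le_or_gt ‖H x‖ (1 / 2) with hx' | hx'
  · have hχ : χ x = 1 := by
      simp only [χ]
      rw [max_eq_right (by linarith), min_eq_left (by linarith)]
    simpa [hχ] using (hG₁ x).2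
  · intro h0
    dsimp only at h0
    rw [h0, dist_zero_left] at hnear
    linarith

theorem exists_continuous_ne_zero_near (hdim : CovDimLE X n) (hE : n + 1 ≤ finrank ℝ E)
    {H : X → E} (hH : Continuous H) {δ : X → ℝ} (hδ : Continuous δ) (hδpos : ∀ x, 0 < δ x) :
    ∃ G : X → E, Continuous G ∧
      ∀ x, dist (G x) (H x) < δ x ∧ G x ≠ 0 ∧ (δ x ≤ ‖H x‖ → G x = H x) := by
  obtain ⟨G, hGc, hG⟩ := exists_continuous_ne_zero_dist_lt_one hdim hE
    (H := fun x => (δ x)⁻¹ • H x) ((hδ.inv₀ fun x => (hδpos x).ne').smul hH)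
  refine ⟨fun x => δ x • G x, hδ.smul hGc, fun x => ?_⟩
  have hδx := hδpos x
  obtain ⟨hd, hne, heq⟩ := hG x
  refine ⟨?_, smul_ne_zero hδx.ne' hne, fun h => ?_⟩
  · calc dist (δ x • G x) (H x) = dist (δ x • G x) (δ x • (δ x)⁻¹ • H x) := by
          rw [smul_inv_smul₀ hδx.ne']
      _ = δ x * dist (G x) ((δ x)⁻¹ • H x) := by rw [dist_smul₀, Real.norm_of_nonneg hδx.le]
      _ < δ x := mul_lt_of_lt_one_right hδx hd
  · have h₁ : 1 ≤ ‖(δ x)⁻¹ • H x‖ := by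
      rwa [norm_smul, norm_inv, Real.norm_of_nonneg hδx.le, le_inv_mul_iff₀ hδx, mul_one]
    show δ x • G x = H x
    rw [heq h₁, smul_inv_smul₀ hδx.ne']

theorem exists_continuousOn_ne_zero_near_of_isClosed (hdim : CovDimLE X n)
    (hE : n + 1 ≤ finrank ℝ E) {C : Set X} (hC : IsClosed C) {H : X → E} (hH : ContinuousOn H C)
    {δ : X → ℝ} (hδ : ContinuousOn δ C) (hδpos : ∀ x ∈ C, 0 < δ x) :
    ∃ G : X → E, ContinuousOn G C ∧
      ∀ x ∈ C, dist (G x) (H x) < δ x ∧ G x ≠ 0 ∧ (δ x ≤ ‖H x‖ → G x = H x) := by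
  classical
  have : NormalSpace C := hC.isClosedEmbedding_subtypeVal.normalSpace
  obtain ⟨G, hGc, hG⟩ := exists_continuous_ne_zero_near (hdim.subtype_of_isClosed hC) hE
    hH.domRestrict hδ.domRestrict fun x => hδpos x x.2
  refine ⟨fun x => if h : x ∈ C then G ⟨x, h⟩ else 0, ?_, fun x hx => by
    simpa [dif_pos hx] using hG ⟨x, hx⟩⟩
  rw [continuousOn_iff_continuous_domRestrict]
  convert hGc using 1
  ext x
  simp [x.2]

end Avoidance

section Charts

variable {X Y : Type*} [TopologicalSpace X] [MetricSpace Y]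

theorem continuous_of_continuousOn_of_eqOn_compl {Z : Type*} [TopologicalSpace Z] {f g : X → Z}
    {U S : Set X} (hU : IsOpen U) (hS : IsClosed S) (hSU : S ⊆ U) (hg : ContinuousOn g U)
    (hf : Continuous f) (hgf : EqOn g f Sᶜ) : Continuous g := by
  have hcov : U ∪ Sᶜ = univ := eq_univ_of_forall fun x => (em (x ∈ S)).imp (hSU ·) id
  exact continuousOn_univ.1
    (hcov ▸ hg.union_of_isOpen (hf.continuousOn.congr hgf) hU hS.isOpen_compl)

theorem lipschitzOnWith_invFunOn_image {Z : Type*} [PseudoMetricSpace Z] [Nonempty Y]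
    {φ : Y → Z} {V : Set Y} {K : ℝ} (hK : ∀ a ∈ V, ∀ b ∈ V, dist a b ≤ K * dist (φ a) (φ b)) :
    LipschitzOnWith (Real.toNNReal K) (invFunOn φ V) (φ '' V) := by
  refine LipschitzOnWith.of_dist_le' ?_
  rintro _ ⟨a, ha, rfl⟩ _ ⟨b, hb, rfl⟩
  have ha' : ∃ a' ∈ V, φ a' = φ a := ⟨a, ha, rfl⟩
  have hb' : ∃ b' ∈ V, φ b' = φ b := ⟨b, hb, rfl⟩
  simpa only [invFunOn_eq ha', invFunOn_eq hb'] using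
    hK _ (invFunOn_mem ha') _ (invFunOn_mem hb')

theorem exists_continuousOn_ne_near_of_chart [NormalSpace X] {E : Type} [NormedAddCommGroup E]
    [NormedSpace ℝ E] [FiniteDimensional ℝ E] {n : ℕ} (hdim : CovDimLE X n)
    (hE : n + 1 ≤ finrank ℝ E) {V : Set Y} {φ : Y → E} {K : ℝ} (hφV : IsOpen (φ '' V))
    (hφ : ContinuousOn φ V) (hK : 0 < K) (hφK : ∀ a ∈ V, ∀ b ∈ V, dist a b ≤ K * dist (φ a) (φ b))
    {z : Y} {r : ℝ} (hr : 0 < r) (hzr : closedBall z r ⊆ V) {f : X → Y} (hf : Continuous f)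
    {ε : X → ℝ} (hε : Continuous ε) (hεpos : ∀ x, 0 < ε x) :
    ∃ G : X → E, ContinuousOn G (f ⁻¹' closedBall z r) ∧ ∀ x ∈ f ⁻¹' closedBall z r,
      G x ∈ φ '' V ∧ dist (G x) (φ (f x)) < ε x / K ∧ G x ≠ φ z ∧
        (r / 2 ≤ dist (f x) z → G x = φ (f x)) := by
  have hzV : z ∈ V := hzr (mem_closedBall_self hr.le)
  obtain ⟨t, ht, htV⟩ := Metric.isOpen_iff.1 hφV (φ z) (mem_image_of_mem φ hzV)
  set s := min (t / 2) (r / (2 * K))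
  -- `s ≤ t / 2` keeps the perturbed coordinates inside `φ '' V`, and `s ≤ r / (2 * K)` confines
  -- the perturbation to the points `x` with `dist (f x) z < r / 2`
  obtain ⟨G, hGc, hG⟩ := exists_continuousOn_ne_zero_near_of_isClosed hdim hE
    (isClosed_closedBall.preimage hf) (H := fun x => φ (f x) - φ z)
    ((hφ.comp hf.continuousOn fun x hx => hzr hx).sub continuousOn_const)
    (δ := fun x => min (ε x / K) s) ((hε.div_const K).min continuous_const).continuousOn
    (fun x _ => lt_min (div_pos (hεpos x) hK) (lt_min (half_pos ht) (by positivity)))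
  refine ⟨fun x => G x + φ z, hGc.add continuousOn_const, fun x hx => ?_⟩
  dsimp only
  obtain ⟨hd, hne, heq⟩ := hG x hx
  have hdist : dist (G x + φ z) (φ (f x)) = dist (G x) (φ (f x) - φ z) := by
    rw [dist_eq_norm, dist_eq_norm, sub_sub_eq_add_sub]
  have hfar : r / 2 ≤ dist (f x) z → G x = φ (f x) - φ z := fun h => by
    refine heq ((min_le_right _ _).trans ((min_le_right _ _).trans ?_))
    rw [div_le_iff₀ (by positivity), ← dist_eq_norm]
    linarith [hφK _ (hzr hx) z hzV]
  refine ⟨?_, hdist ▸ hd.trans_le (min_le_left _ _), fun h => hne (add_eq_right.1 h),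
    fun h => by rw [hfar h, sub_add_cancel]⟩
  by_cases hs : s ≤ ‖φ (f x) - φ z‖
  · rw [heq ((min_le_right _ _).trans hs), sub_add_cancel]
    exact mem_image_of_mem φ (hzr hx)
  · refine htV (mem_ball_iff_norm.2 ?_)
    rw [add_sub_cancel_right]
    calc ‖G x‖ ≤ ‖φ (f x) - φ z‖ + dist (G x) (φ (f x) - φ z) :=
          dist_eq_norm (G x) _ ▸ norm_le_norm_add_norm_sub' _ _
      _ < s + s := add_lt_add (not_le.1 hs) (hd.trans_le (min_le_right _ _))
      _ ≤ t := by linarith [min_le_left (t / 2) (r / (2 * K))]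

theorem exists_continuous_ne_near_of_biLipschitz_chart [NormalSpace X] {E : Type}
    [NormedAddCommGroup E] [NormedSpace ℝ E] [FiniteDimensional ℝ E] {n : ℕ} (hdim : CovDimLE X n)
    (hE : n + 1 ≤ finrank ℝ E) {V : Set Y} {φ : Y → E} {K : ℝ} (hφV : IsOpen (φ '' V))
    (hφ : ContinuousOn φ V) (hK : 0 < K) (hφK : ∀ a ∈ V, ∀ b ∈ V, dist a b ≤ K * dist (φ a) (φ b))
    {z : Y} {r : ℝ} (hr : 0 < r) (hzr : closedBall z r ⊆ V) {f : X → Y} (hf : Continuous f)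
    {ε : X → ℝ} (hε : Continuous ε) (hεpos : ∀ x, 0 < ε x) :
    ∃ g : X → Y, Continuous g ∧
      ∀ x, dist (g x) (f x) < ε x ∧ g x ≠ z ∧ (r / 2 ≤ dist (f x) z → g x = f x) := by
  classical
  obtain ⟨G, hGc, hG⟩ :=
    exists_continuousOn_ne_near_of_chart hdim hE hφV hφ hK hφK hr hzr hf hε hεpos
  have : Nonempty Y := ⟨z⟩
  set ψ := invFunOn φ V
  have hψ : LipschitzOnWith (Real.toNNReal K) ψ (φ '' V) := lipschitzOnWith_invFunOn_image hφK
  have hψφ : ∀ a ∈ V, ψ (φ a) = a :=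
    InjOn.leftInvOn_invFunOn fun a ha b hb h => dist_le_zero.1 (by simpa [h] using hφK a ha b hb)
  set C := f ⁻¹' closedBall z r
  set g := C.piecewise (fun x => ψ (G x)) f
  have hg : ∀ x, dist (g x) (f x) < ε x ∧ g x ≠ z ∧ (r / 2 ≤ dist (f x) z → g x = f x) := by
    intro x
    by_cases hx : x ∉ C
    · rw [show g x = f x from piecewise_eq_of_notMem _ _ _ hx, dist_self]
      exact ⟨hεpos x, fun h => hx (show f x ∈ closedBall z r from h ▸ mem_closedBall_self hr.le),
        fun _ => rfl⟩
    rw [not_not] at hx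
    rw [show g x = ψ (G x) from piecewise_eq_of_mem _ _ _ hx]
    obtain ⟨hGV, hd, hne, hfar⟩ := hG x hx
    refine ⟨?_, fun h => hne ?_, fun h => by rw [hfar h, hψφ _ (hzr hx)]⟩
    · calc dist (ψ (G x)) (f x) = dist (ψ (G x)) (ψ (φ (f x))) := by rw [hψφ _ (hzr hx)]
        _ ≤ K * dist (G x) (φ (f x)) := by
          simpa [Real.coe_toNNReal _ hK.le] using
            hψ.dist_le_mul _ hGV _ (mem_image_of_mem φ (hzr hx))
        _ < K * (ε x / K) := mul_lt_mul_of_pos_left hd hK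
        _ = ε x := mul_div_cancel₀ _ hK.ne'
    · rw [← h, invFunOn_eq hGV]
  refine ⟨g, continuous_of_continuousOn_of_eqOn_compl (isOpen_ball.preimage hf)
    (isClosed_closedBall.preimage hf) (preimage_mono (closedBall_subset_ball (half_lt_self hr)))
    ?_ hf fun x hx => (hg x).2.2 (not_le.1 (mt mem_closedBall.2 hx)).le, hg⟩
  exact (hψ.continuousOn.comp (hGc.mono fun x hx => ball_subset_closedBall hx)
    fun x hx => (hG x (ball_subset_closedBall hx)).1).congr
    fun x hx => piecewise_eq_of_mem _ _ _ (ball_subset_closedBall hx)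

end Charts

theorem HasBiLipschitzAtlas.exists_continuous_ne_near {X Y : Type*} [TopologicalSpace X]
    [NormalSpace X] [MetricSpace Y] {n : ℕ} (hdim : CovDimLE X n) (hY : HasBiLipschitzAtlas n Y)
    (z : Y) :
    ∃ V ∈ 𝓝 z, ∀ r, 0 < r → closedBall z r ⊆ V → ∀ f : X → Y, Continuous f →
      ∀ ε : X → ℝ, Continuous ε → (∀ x, 0 < ε x) → ∃ g : X → Y, Continuous g ∧
        ∀ x, dist (g x) (f x) < ε x ∧ g x ≠ z ∧ (r / 2 ≤ dist (f x) z → g x = f x) := by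
  obtain ⟨V, φ, hzV, hV, hφV, -, K, hK, hφK⟩ := hY z
  exact ⟨V, hV.mem_nhds hzV, fun r hr hrV f hf ε hε hεpos =>
    exists_continuous_ne_near_of_biLipschitz_chart hdim finrank_euclideanSpace_fin.ge hφV
      (LipschitzOnWith.of_dist_le' fun a ha b hb => (hφK a ha b hb).1).continuousOn hK
      (fun a ha b hb => (hφK a ha b hb).2) hr hrV hf hε hεpos⟩

section Gluing

variable {X Y : Type*} [TopologicalSpace X] [PseudoMetricSpace Y]

theorem IsDiscrete.exists_radius {Z : Set Y} (hZ : IsDiscrete Z) {N : Z → Set Y}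
    (hN : ∀ z : Z, N z ∈ 𝓝 (z : Y)) :
    ∃ r : Z → ℝ, ∀ z : Z, 0 < r z ∧ closedBall (z : Y) (r z) ⊆ N z ∧
      ball (z : Y) (2 * r z) ∩ Z = {(z : Y)} := by
  choose ρ hρ hρZ using fun z : Z => exists_ball_inter_eq_singleton_of_mem_discrete hZ z.2
  choose w hw hwN using fun z : Z => nhds_basis_closedBall.mem_iff.1 (hN z)
  refine ⟨fun z => min (w z) (ρ z / 2), fun z => ⟨lt_min (hw z) (half_pos (hρ z)),
    (closedBall_subset_closedBall (min_le_left _ _)).trans (hwN z), ?_⟩⟩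
  refine Subset.antisymm ?_ (singleton_subset_iff.2 ⟨mem_ball_self ?_, z.2⟩)
  · rw [← hρZ z]
    exact inter_subset_inter_left _ (ball_subset_ball (by linarith [min_le_right (w z) (ρ z / 2)]))
  · exact mul_pos two_pos (lt_min (hw z) (half_pos (hρ z)))

theorem pairwise_disjoint_ball_of_ball_two_mul_inter_eq {Z : Set Y} {r : Z → ℝ}
    (hZ : ∀ z : Z, ball (z : Y) (2 * r z) ∩ Z = {(z : Y)}) :
    Pairwise fun z z' : Z => Disjoint (ball (z : Y) (r z)) (ball (z' : Y) (r z')) := by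
  intro z z' hne
  refine disjoint_left.2 fun y hy hy' => ?_
  wlog h : r z' ≤ r z generalizing z z'
  · exact this hne.symm hy' hy (le_of_not_ge h)
  have hz' : (z' : Y) ∈ ball (z : Y) (2 * r z) ∩ Z := by
    refine ⟨mem_ball.2 ?_, z'.2⟩
    linarith [dist_triangle (z' : Y) y z, dist_comm (z' : Y) y, mem_ball.1 hy, mem_ball.1 hy']
  rw [hZ z] at hz'
  exact hne (Subtype.ext hz').symm

theorem exists_continuous_glue_of_pairwise_disjoint_ball {ι : Type*} {f : X → Y}
    (hf : Continuous f) {c : ι → Y} {r : ι → ℝ}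
    (hdisj : Pairwise fun i j => Disjoint (ball (c i) (r i)) (ball (c j) (r j)))
    {g : ι → X → Y} (hg : ∀ i, Continuous (g i))
    (hgf : ∀ i x, r i / 2 ≤ dist (f x) (c i) → g i x = f x)
    (hgr : ∀ i x, dist (g i x) (f x) ≤ r i / 2) :
    ∃ G : X → Y, Continuous G ∧ (∀ i x, f x ∈ ball (c i) (r i) → G x = g i x) ∧
      ∀ x, (∀ i, f x ∉ ball (c i) (r i)) → G x = f x := by
  classical
  set G := fun x => if h : ∃ i, f x ∈ ball (c i) (r i) then g h.choose x else f x
  have hGg : ∀ i x, f x ∈ ball (c i) (r i) → G x = g i x := by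
    intro i x hx
    have h : ∃ i, f x ∈ ball (c i) (r i) := ⟨i, hx⟩
    simp only [G, dif_pos h]
    rw [hdisj.eq (not_disjoint_iff.2 ⟨f x, h.choose_spec, hx⟩)]
  have hGf : ∀ x, (∀ i, f x ∉ ball (c i) (r i)) → G x = f x :=
    fun x hx => dif_neg (not_exists.2 hx)
  refine ⟨G, continuous_iff_continuousAt.2 fun x₀ => ?_, hGg, hGf⟩
  by_cases hx₀ : ∃ i, f x₀ ∈ ball (c i) (r i)
  · obtain ⟨i, hi⟩ := hx₀
    exact (hg i).continuousAt.congr (Filter.eventuallyEq_of_mem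
      ((isOpen_ball.preimage hf).mem_nhds hi) fun x hx => (hGg i x hx).symm)
  replace hx₀ := not_exists.1 hx₀
  -- `G` moves `f x` only when `f x` is within `r i / 2` of a center `c i` that is `r i` away from
  -- `f x₀`, and then by at most `r i / 2`
  have hbound : ∀ x, dist (G x) (f x) ≤ dist (f x) (f x₀) := by
    intro x
    by_cases hx : ∃ i, f x ∈ ball (c i) (r i)
    · obtain ⟨i, hi⟩ := hx
      rw [hGg i x hi]
      by_cases hne : g i x = f x
      · rw [hne, dist_self]
        exact dist_nonneg
      · linarith [hgr i x, not_le.1 (mt (hgf i x) hne), not_lt.1 (mt mem_ball.2 (hx₀ i)),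
          dist_triangle_left (f x₀) (c i) (f x)]
    · rw [hGf x (not_exists.1 hx), dist_self]
      exact dist_nonneg
  rw [ContinuousAt, hGf x₀ hx₀, tendsto_iff_dist_tendsto_zero]
  refine squeeze_zero (fun _ => dist_nonneg)
    (fun x => (dist_triangle _ (f x) _).trans (add_le_add (hbound x) le_rfl)) ?_
  simpa using ((hf.tendsto x₀).dist (tendsto_const_nhds (x := f x₀))).add
    ((hf.tendsto x₀).dist (tendsto_const_nhds (x := f x₀)))

end Gluing

/-- Over a normal space of covering dimension at most `n`, a continuous map into a
metric `(n+1)`-manifold with a bi-Lipschitz atlas can be perturbed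
pointwise-arbitrarily-little so as to avoid a discrete subset `Z`, keeping the map
unchanged outside the preimage of any prescribed neighborhood `W` of `Z`. -/
theorem avoid_discrete_in_manifold_of_covDimLE
    (n : ℕ) (X : Type*) [TopologicalSpace X] [NormalSpace X] (hdim : CovDimLE X n)
    (Y : Type*) [MetricSpace Y] (hY : HasBiLipschitzAtlas n Y)
    (Z : Set Y) (hZ : DiscreteTopology Z)
    (f : X → Y) (hf : Continuous f)
    (ε : X → ℝ) (hε : Continuous ε) (hεpos : ∀ x, 0 < ε x)
    (W : Set Y) (hW : W ∈ nhdsSet Z) :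
    ∃ g : X → Y, Continuous g ∧
      (∀ x, dist (g x) (f x) < ε x ∧ g x ∉ Z) ∧
      ∀ x, f x ∉ W → g x = f x := by
  choose V hV havoid using fun z : Z => hY.exists_continuous_ne_near (X := X) hdim (z : Y)
  obtain ⟨r, hr⟩ := (isDiscrete_iff_discreteTopology.2 hZ).exists_radius (N := fun z => V z ∩ W)
    fun z => Filter.inter_mem (hV z) (mem_nhdsSet_iff_forall.1 hW _ z.2)
  choose hr hrN hrZ using hr
  choose g hgc hg using fun z : Z => havoid z (r z) (hr z) ((hrN z).trans inter_subset_left) f hf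
    (fun x => min (ε x) (r z / 2)) (hε.min continuous_const)
    fun x => lt_min (hεpos x) (half_pos (hr z))
  obtain ⟨G, hGc, hGg, hGf⟩ := exists_continuous_glue_of_pairwise_disjoint_ball hf
    (pairwise_disjoint_ball_of_ball_two_mul_inter_eq hrZ) hgc (fun z x => (hg z x).2.2)
    fun z x => ((hg z x).1.trans_le (min_le_right _ _)).le
  refine ⟨G, hGc, fun x => ?_, fun x hx => hGf x fun z hz =>
    hx ((hrN z).trans inter_subset_right (ball_subset_closedBall hz))⟩
  by_cases hx : ∃ z : Z, f x ∈ ball (z : Y) (r z)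
  · obtain ⟨z, hz⟩ := hx
    obtain ⟨hgε, hgz, -⟩ := hg z x
    have hgf : dist (g z x) (f x) < r z / 2 := hgε.trans_le (min_le_right _ _)
    have hball : g z x ∈ ball (z : Y) (2 * r z) := by
      rw [mem_ball]
      linarith [dist_triangle (g z x) (f x) z, mem_ball.1 hz, hr z]
    rw [hGg z x hz]
    refine ⟨hgε.trans_le (min_le_left _ _), fun hgZ => hgz ?_⟩
    have hgz' : g z x ∈ ball (z : Y) (2 * r z) ∩ Z := ⟨hball, hgZ⟩
    rwa [hrZ z] at hgz'
  · rw [hGf x (not_exists.1 hx), dist_self]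
    exact ⟨hεpos x, fun hfZ => hx ⟨⟨f x, hfZ⟩, mem_ball_self (hr _)⟩⟩
end

section
/- Let p be an n×n complex orthogonal projection matrix that is block diagonal with blocks of size 1 or 2, whose entries are all real and nonnegative. If every column of p has Euclidean norm strictly less than 1/√2, then p = 0. -/
/-!
The hypotheses split `p` into diagonal blocks of size at most two. Each block is again
idempotent, so its trace is its rank, a natural number. Since `p` is hermitian and idempotent,
a diagonal entry `p j j` is the squared norm of column `j`, hence `< 1/2`; so the trace of a
block is `< 1`, its rank is `0`, and the block vanishes.
-/

open Matrix Finset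

namespace Matrix

variable {ι 𝕜 : Type*} [Fintype ι] [RCLike 𝕜]

theorem eq_zero_of_isIdempotentElem_of_re_trace_lt_one [DecidableEq ι] {q : Matrix ι ι 𝕜}
    (hq : IsIdempotentElem q) (htr : RCLike.re q.trace < 1) : q = 0 := by
  have hf : IsIdempotentElem q.toLin' := hq.map toLinAlgEquiv'
  have hrank : q.trace = (Module.finrank 𝕜 (LinearMap.range q.toLin') : 𝕜) := by
    rw [← trace_toLin'_eq, (LinearMap.IsIdempotentElem.isProj_range _ hf).trace]
  rw [hrank, RCLike.natCast_re, Nat.cast_lt_one] at htr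
  have hzero : q.toLin' = 0 := (LinearMap.IsIdempotentElem.trace_eq_zero_iff hf).mp
    (by rw [trace_toLin'_eq, hrank, htr, Nat.cast_zero])
  exact toLin'.map_eq_zero_iff.mp hzero

theorem IsHermitian.re_apply_self_eq_sum_norm_sq {p : Matrix ι ι 𝕜} (hh : p.IsHermitian)
    (hp : IsIdempotentElem p) (j : ι) : RCLike.re (p j j) = ∑ i, ‖p i j‖ ^ 2 := by
  have : p j j = (pᴴ * p) j j := by rw [hh.eq, hp.eq]
  simp [this, mul_apply, RCLike.conj_mul]

theorem isIdempotentElem_submatrix {R : Type*} [Semiring R] {p : Matrix ι ι R}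
    (hp : IsIdempotentElem p) {B : Finset ι} (hB : ∀ u ∈ B, ∀ w ∉ B, p u w = 0) :
    IsIdempotentElem (p.submatrix ((↑) : B → ι) ((↑) : B → ι)) := by
  ext u v
  have hsum : ∑ w, p u w * p w v = ∑ w ∈ B, p u w * p w v :=
    (sum_subset (subset_univ B) fun w _ hw => by rw [hB u u.2 w hw, zero_mul]).symm
  simpa [mul_apply, sum_attach B fun w => p u w * p w v, ← hsum] using
    congrFun (congrFun hp.eq u) v

theorem submatrix_eq_zero_of_card_le_two [DecidableEq ι] {p : Matrix ι ι 𝕜}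
    (hp : IsIdempotentElem p) {B : Finset ι} (hcard : #B ≤ 2)
    (hB : ∀ u ∈ B, ∀ w ∉ B, p u w = 0)
    (hdiag : ∀ j ∈ B, RCLike.re (p j j) < 1 / 2) :
    p.submatrix ((↑) : B → ι) ((↑) : B → ι) = 0 := by
  refine eq_zero_of_isIdempotentElem_of_re_trace_lt_one (isIdempotentElem_submatrix hp hB) ?_
  rcases B.eq_empty_or_nonempty with rfl | hne
  · simp [trace]
  calc RCLike.re (p.submatrix ((↑) : B → ι) ((↑) : B → ι)).trace
        = ∑ j ∈ B, RCLike.re (p j j) := by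
        simp [trace, sum_attach B fun j => RCLike.re (p j j)]
    _ < ∑ _j ∈ B, (1 / 2 : ℝ) := sum_lt_sum_of_nonempty hne hdiag
    _ ≤ 1 := by
        have : (#B : ℝ) ≤ 2 := by exact_mod_cast hcard
        rw [sum_const, nsmul_eq_mul]
        linarith

end Matrix

theorem Fin.exists_mem_Ico_castSucc_succ {r : ℕ} (s : Fin (r + 1) → ℕ) {v : ℕ}
    (h0 : s 0 ≤ v) (hlast : v < s (Fin.last r)) :
    ∃ t : Fin r, v ∈ Set.Ico (s t.castSucc) (s t.succ) := by
  by_contra! h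
  have hle : ∀ u, s u ≤ v :=
    Fin.induction h0 fun t ht => not_lt.mp fun hlt => h t ⟨ht, hlt⟩
  exact (hle (Fin.last r)).not_gt hlast

theorem Monotone.eq_of_mem_Ico_castSucc_succ {r : ℕ} {s : Fin (r + 1) → ℕ} (hs : Monotone s)
    {t t' : Fin r} {v : ℕ}
    (h : v ∈ Set.Ico (s t.castSucc) (s t.succ))
    (h' : v ∈ Set.Ico (s t'.castSucc) (s t'.succ)) : t = t' := by
  by_contra hne
  wlog hlt : t < t' generalizing t t'
  · exact this h' h (Ne.symm hne) (lt_of_le_of_ne (not_lt.mp hlt) (Ne.symm hne))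
  have := hs (Fin.succ_le_castSucc_iff.mpr hlt)
  simp only [Set.mem_Ico] at h h'
  omega

theorem Monotone.exists_block_card_le_two {r n : ℕ} {s : Fin (r + 1) → ℕ} (hs : Monotone s)
    (hstep : ∀ t : Fin r, s t.succ ≤ s t.castSucc + 2) (h0 : s 0 = 0)
    (hlast : s (Fin.last r) = n) (i : Fin n) :
    ∃ B : Finset (Fin n), i ∈ B ∧ #B ≤ 2 ∧ ∀ u ∈ B, ∀ w ∉ B,
      ¬ ∃ t : Fin r, s t.castSucc ≤ u.val ∧ u.val < s t.succ ∧
        s t.castSucc ≤ w.val ∧ w.val < s t.succ := by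
  obtain ⟨t, hit⟩ :=
    Fin.exists_mem_Ico_castSucc_succ s (h0 ▸ i.val.zero_le) (hlast ▸ i.isLt)
  refine ⟨({k : Fin n | k.val ∈ Set.Ico (s t.castSucc) (s t.succ)} : Finset (Fin n)),
    by simpa using hit, ?_, ?_⟩
  · calc #{k : Fin n | k.val ∈ Set.Ico (s t.castSucc) (s t.succ)}
          ≤ #(Finset.Ico (s t.castSucc) (s t.succ)) :=
            card_le_card_of_injOn Fin.val (fun k hk => by simpa using hk) Fin.val_injective.injOn
      _ ≤ 2 := by rw [Nat.card_Ico]; exact Nat.sub_le_iff_le_add'.mpr (hstep t)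
  · rintro u hu w hw ⟨t', hu₁, hu₂, hw₁, hw₂⟩
    simp only [mem_filter, mem_univ, true_and] at hu hw
    obtain rfl := hs.eq_of_mem_Ico_castSucc_succ hu ⟨hu₁, hu₂⟩
    exact hw ⟨hw₁, hw₂⟩

theorem small_column_block_projection_eq_zero_general
    (n : ℕ) (p : Matrix (Fin n) (Fin n) ℂ)
    (hproj : pᴴ = p ∧ p * p = p)
    (hblock : ∃ (r : ℕ) (s : Fin (r + 1) → ℕ),
      s 0 = 0 ∧ s (Fin.last r) = n ∧
      (∀ t : Fin r, s t.succ = s t.castSucc + 1 ∨ s t.succ = s t.castSucc + 2) ∧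
      ∀ i j : Fin n,
        (¬ ∃ t : Fin r, s t.castSucc ≤ i.val ∧ i.val < s t.succ ∧
            s t.castSucc ≤ j.val ∧ j.val < s t.succ) → p i j = 0)
    (hcol : ∀ j, Real.sqrt (∑ i, ‖p i j‖ ^ 2) < 1 / Real.sqrt 2) :
    p = 0 := by
  obtain ⟨hherm, hidem⟩ := hproj
  obtain ⟨r, s, hs0, hslast, hstep, hzero⟩ := hblock
  have hdiag (j : Fin n) : RCLike.re (p j j) < 1 / 2 := by
    have hj := hcol j
    rw [Real.sqrt_lt' (by positivity), div_pow, Real.sq_sqrt zero_le_two, one_pow,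
      ← IsHermitian.re_apply_self_eq_sum_norm_sq hherm hidem] at hj
    exact hj
  have hmono : Monotone s :=
    Fin.monotone_iff_le_succ.mpr fun t => by rcases hstep t with h | h <;> omega
  ext i j
  obtain ⟨B, hiB, hcard, hB⟩ :=
    hmono.exists_block_card_le_two (fun t => by rcases hstep t with h | h <;> omega) hs0 hslast i
  by_cases hjB : j ∈ B
  · have hsub := submatrix_eq_zero_of_card_le_two hidem hcard
      (fun u hu w hw => hzero u w (hB u hu w hw)) fun j _ => hdiag j
    exact congrFun (congrFun hsub ⟨i, hiB⟩) ⟨j, hjB⟩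
  · exact hzero i j (hB i hiB j hjB)

/-- An `n × n` orthogonal projection matrix that is block diagonal with blocks of
size 1 or 2 (encoded by the partial-sum sequence `s` of the block sizes), all of
whose entries are real and nonnegative, and all of whose columns have Euclidean
norm strictly less than `1/√2`, is zero. -/
theorem small_column_block_projection_eq_zero
    (n : ℕ) (p : Matrix (Fin n) (Fin n) ℂ)
    (hproj : pᴴ = p ∧ p * p = p)
    (hreal : ∀ i j, (p i j).im = 0 ∧ 0 ≤ (p i j).re)
    (hblock : ∃ (r : ℕ) (s : Fin (r + 1) → ℕ),
      s 0 = 0 ∧ s (Fin.last r) = n ∧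
      (∀ t : Fin r, s t.succ = s t.castSucc + 1 ∨ s t.succ = s t.castSucc + 2) ∧
      ∀ i j : Fin n,
        (¬ ∃ t : Fin r, s t.castSucc ≤ i.val ∧ i.val < s t.succ ∧
            s t.castSucc ≤ j.val ∧ j.val < s t.succ) → p i j = 0)
    (hcol : ∀ j, Real.sqrt (∑ i, ‖p i j‖ ^ 2) < 1 / Real.sqrt 2) :
    p = 0 :=
  small_column_block_projection_eq_zero_general n p hproj hblock hcol
end

section
/- Let X be a compact topological space and f : X → ℓ²(ℕ*) a continuous map, and let ε : X → ℝ_{>0} be continuous. Then there exists a continuous map g : X → ℓ²(ℕ*) such that for all x ∈ X, ‖f(x) − g(x)‖ ≤ ε(x) and g(x) ≠ 0. -/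
open scoped ComplexInnerProductSpace


/-- Over a compact space, a continuous map into `ℓ²` may be perturbed by at most
`ε(x)` pointwise so as to avoid `0`. -/
theorem avoid_zero_in_l2_of_compact
    (X : Type*) [TopologicalSpace X] [CompactSpace X]
    (H : Type*) [NormedAddCommGroup H] [InnerProductSpace ℂ H] [CompleteSpace H]
    (e : HilbertBasis ℕ ℂ H)
    (f : X → H) (hf : Continuous f)
    (ε : X → ℝ) (hε : Continuous ε) (hεpos : ∀ x, 0 < ε x) :
    ∃ g : X → H, Continuous g ∧ ∀ x, ‖f x - g x‖ ≤ ε x ∧ g x ≠ 0 := by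
  classical
  by_cases hne : Nonempty X
  swap
  · exact ⟨f, hf, fun x => absurd ⟨x⟩ hne⟩
  -- minimum of ε
  obtain ⟨x₀, -, hx₀⟩ := isCompact_univ.exists_isMinOn Set.univ_nonempty
    hε.continuousOn
  set c : ℝ := ε x₀ / 2 with hc
  have hcpos : 0 < c := by have := hεpos x₀; rw [hc]; linarith
  -- Parseval
  have hs : ∀ x : X, HasSum (fun i => ‖⟪e i, f x⟫‖ ^ 2) (‖f x‖ ^ 2) := by
    intro x
    have h2 : (0:ℝ) < (2 : ENNReal).toReal := by norm_num
    have := lp.hasSum_norm h2 (e.repr (f x))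
    have h22 : (2 : ENNReal).toReal = (2:ℝ) := by norm_num
    rw [h22] at this
    simp only [Real.rpow_two] at this
    simpa [e.repr_apply_apply] using this
  -- the open sets
  set S : ℕ → Set X := fun k =>
    {x | ‖f x‖ ^ 2 - ∑ i ∈ Finset.range k, ‖⟪e i, f x⟫‖ ^ 2 < c ^ 2}
  have hSopen : ∀ k, IsOpen (S k) := by
    intro k
    have hcont : Continuous fun x =>
        ‖f x‖ ^ 2 - ∑ i ∈ Finset.range k, ‖⟪e i, f x⟫‖ ^ 2 := by
      apply Continuous.sub
      · exact (hf.norm).pow 2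
      · apply continuous_finset_sum
        intro i _
        exact ((Continuous.inner continuous_const hf).norm).pow 2
    exact isOpen_lt hcont continuous_const
  have hScover : Set.univ ⊆ ⋃ k, S k := by
    intro x _
    have := (hs x).tendsto_sum_nat
    have h := (tendsto_order.1 this).1 (‖f x‖ ^ 2 - c ^ 2) (by
      have : (0:ℝ) < c ^ 2 := by positivity
      linarith)
    obtain ⟨k, hk⟩ := h.exists
    exact Set.mem_iUnion.2 ⟨k, by simp only [S, Set.mem_setOf_eq]; linarith⟩
  have hSmono : Monotone S := by
    intro k l hkl x hx
    have hsum : ∑ i ∈ Finset.range k, ‖⟪e i, f x⟫‖ ^ 2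
        ≤ ∑ i ∈ Finset.range l, ‖⟪e i, f x⟫‖ ^ 2 := by
      apply Finset.sum_le_sum_of_subset_of_nonneg (Finset.range_subset_range.2 hkl)
      intro i _ _
      positivity
    simp only [S, Set.mem_setOf_eq] at hx ⊢
    linarith
  obtain ⟨t, ht⟩ := isCompact_univ.elim_finite_subcover S hSopen hScover
  set N : ℕ := t.sup id with hN
  have hSN : ∀ x : X, x ∈ S N := by
    intro x
    obtain ⟨k, hk, hxk⟩ := Set.mem_iUnion₂.1 (ht (Set.mem_univ x))
    exact hSmono (Finset.le_sup (f := id) hk) hxk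
  -- coefficient bound
  have hcoef : ∀ x : X, ‖⟪e N, f x⟫‖ < c := by
    intro x
    have hx := hSN x
    simp only [S, Set.mem_setOf_eq] at hx
    have hle : ∑ i ∈ Finset.range (N+1), ‖⟪e i, f x⟫‖ ^ 2 ≤ ‖f x‖ ^ 2 := by
      apply sum_le_hasSum _ _ (hs x)
      intro i _
      positivity
    rw [Finset.sum_range_succ] at hle
    have h1 : ‖⟪e N, f x⟫‖ ^ 2 < c ^ 2 := by linarith
    exact lt_of_pow_lt_pow_left₀ 2 hcpos.le h1
  -- define g
  refine ⟨fun x => f x + (ε x : ℂ) • e N, ?_, ?_⟩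
  · exact hf.add ((Complex.continuous_ofReal.comp hε).smul continuous_const)
  · intro x
    dsimp only
    have hεx := hεpos x
    have hcε : c ≤ ε x / 2 := by
      have : ε x₀ ≤ ε x := hx₀ (Set.mem_univ x)
      rw [hc]; linarith
    have hnorm : ‖(ε x : ℂ) • e N‖ = ε x := by
      rw [norm_smul, e.orthonormal.1 N, mul_one, Complex.norm_real,
        Real.norm_eq_abs, abs_of_pos hεx]
    constructor
    · simp only [sub_add_cancel_left, norm_neg]
      rw [hnorm]
    · intro hg0
      have hinner : ⟪e N, f x + (ε x : ℂ) • e N⟫ = ⟪e N, f x⟫ + (ε x : ℂ) := by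
        rw [inner_add_right, inner_smul_right]
        have : ⟪e N, e N⟫ = 1 := by
          have := e.orthonormal.1 N
          rw [@inner_self_eq_norm_sq_to_K ℂ, this]; norm_num
        rw [this, mul_one]
      have h0 : ⟪e N, f x⟫ + (ε x : ℂ) = 0 := by
        rw [← hinner, hg0, inner_zero_right]
      have : ‖⟪e N, f x⟫‖ = ε x := by
        have : ⟪e N, f x⟫ = -(ε x : ℂ) := by linear_combination h0
        rw [this, norm_neg, Complex.norm_real, Real.norm_eq_abs, abs_of_pos hεx]
      have := hcoef x
      linarith
end
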